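/- arXiv:2102.06959 — 9 statements merged into one kernel-verified Lean document; each statement's English description precedes it below -/
import Mathlib

section
/- Let α, β, δ be integers with δ > 0, and let f(r) = (α·r + β)/δ (Euclidean division quotient) and f̊(r) = (α·r + β) % δ. Let g : ℤ → ℤ and q ∈ ℤ be such that f(g(q) - 1) < f(g(q)). Then for every integer r with f(r) = f(g(q)), we have f̊(r)/α = r - g(q), provided α > 0. -/
theorem stmt_0 (α β δ : ℤ) (hδ : 0 < δ) (hα : 0 < α)
    (f : ℤ → ℤ) (hf : ∀ r, f r = (α * r + β) / δ)
    (g : ℤ → ℤ) (q : ℤ) (hq : f (g q - 1) < f (g q)) :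
    ∀ r : ℤ, f r = f (g q) → ((α * r + β) % δ) / α = r - g q := by
  intro r hr
  set s := g q with hs
  set t : ℤ := α * s + β - δ * f s with ht
  have h0t : 0 ≤ t := by
    have := Int.emod_nonneg (α * s + β) (ne_of_gt hδ)
    rw [ht, hf s]; rwa [Int.emod_def] at this
  have htα : t < α := by
    -- from f (s-1) < f s : α*(s-1)+β < δ * f s
    have h1 : f (s - 1) ≤ f s - 1 := by omega
    have h2 : α * (s - 1) + β < δ * f s := by
      have := Int.lt_ediv_add_one_mul_self (α * (s - 1) + β) hδ
      rw [← hf (s - 1)] at this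
      calc α * (s - 1) + β < (f (s - 1) + 1) * δ := this
        _ ≤ f s * δ := by nlinarith
        _ = δ * f s := mul_comm _ _
    nlinarith [h2]
  have hmod : (α * r + β) % δ = t + (r - s) * α := by
    rw [Int.emod_def, ← hf r, hr]
    ring
  rw [hmod, Int.add_mul_ediv_right _ _ (ne_of_gt hα),
    Int.ediv_eq_zero_of_lt h0t htα, zero_add]
end

section
/- Let α, β, δ be integers with δ ≥ α > 0, f(r) = (α·r + β)/δ, and f̂(q) = (δ·q + α - β - 1)/α. Then for every q ∈ ℤ: f(f̂(q)) = q and f(f̂(q) - 1) = q - 1. -/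
theorem stmt_1 (α β δ : ℤ) (hα : 0 < α) (hδ : α ≤ δ)
    (f : ℤ → ℤ) (hf : ∀ r, f r = (α * r + β) / δ)
    (fhat : ℤ → ℤ) (hfhat : ∀ q, fhat q = (δ * q + α - β - 1) / α) :
    ∀ q : ℤ, f (fhat q) = q ∧ f (fhat q - 1) = q - 1 := by
  intro q
  have hδ0 : 0 < δ := lt_of_lt_of_le hα hδ
  set n := δ * q + α - β - 1 with hn
  have key : α * (n / α) + n % α = n := Int.mul_ediv_add_emod n α
  have hr0 : 0 ≤ n % α := Int.emod_nonneg n hα.ne'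
  have hr1 : n % α < α := Int.emod_lt_of_pos n hα
  constructor
  · rw [hf, hfhat]
    have h1 : α * (n / α) + β = (α - 1 - n % α) + δ * q := by linarith
    rw [← hn, h1, Int.add_mul_ediv_left _ _ hδ0.ne',
      Int.ediv_eq_zero_of_lt (by linarith) (by linarith), zero_add]
  · rw [hf, hfhat]
    have h1 : α * (n / α - 1) + β = (δ - 1 - n % α) + δ * (q - 1) := by rw [mul_sub]; linarith
    rw [← hn, h1, Int.add_mul_ediv_left _ _ hδ0.ne',
      Int.ediv_eq_zero_of_lt (by linarith) (by linarith), zero_add]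
end

section
/- Let α, β, δ be integers with δ ≥ α > 0, f(r) = (α·r + β)/δ, and f̂(q) = (δ·q + α - β - 1)/α. Then for all integers r and q: f(r) = q if and only if f̂(q) ≤ r < f̂(q+1). -/
theorem stmt_2 (α β δ : ℤ) (hα : 0 < α) (hδ : α ≤ δ)
    (f : ℤ → ℤ) (hf : ∀ r, f r = (α * r + β) / δ)
    (fhat : ℤ → ℤ) (hfhat : ∀ q, fhat q = (δ * q + α - β - 1) / α) :
    ∀ r q : ℤ, f r = q ↔ (fhat q ≤ r ∧ r < fhat (q + 1)) := by
  intro r q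
  have hδ0 : 0 < δ := lt_of_lt_of_le hα hδ
  rw [hf, hfhat, hfhat]
  have h1 : q ≤ (α * r + β) / δ ↔ q * δ ≤ α * r + β := Int.le_ediv_iff_mul_le hδ0
  have h2 : (α * r + β) / δ < q + 1 ↔ α * r + β < (q + 1) * δ := Int.ediv_lt_iff_lt_mul hδ0
  have h3 : r + 1 ≤ (δ * q + α - β - 1) / α ↔ (r + 1) * α ≤ δ * q + α - β - 1 :=
    Int.le_ediv_iff_mul_le hα
  have h4 : r + 1 ≤ (δ * (q + 1) + α - β - 1) / α ↔ (r + 1) * α ≤ δ * (q + 1) + α - β - 1 :=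
    Int.le_ediv_iff_mul_le hα
  constructor
  · intro h
    have e1 : q * δ ≤ α * r + β := h1.mp h.ge
    have e2 : α * r + β < (q + 1) * δ := h2.mp (by omega)
    refine ⟨?_, ?_⟩
    · by_contra hc
      push_neg at hc
      have := h3.mp (by omega)
      nlinarith
    · rw [Int.lt_iff_add_one_le, h4]
      nlinarith
  · rintro ⟨ha, hb⟩
    have e1 : ¬ (r + 1) * α ≤ δ * q + α - β - 1 := fun hc => by
      have := h3.mpr hc; omega
    have e2 : (r + 1) * α ≤ δ * (q + 1) + α - β - 1 := h4.mp (by omega)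
    push_neg at e1
    have g1 : q ≤ (α * r + β) / δ := h1.mpr (by nlinarith)
    have g2 : (α * r + β) / δ < q + 1 := h2.mpr (by nlinarith)
    omega
end

section
/- Let α, β, δ be integers with δ ≥ α > 0, f(r) = (α·r + β)/δ, f̊(r) = (α·r + β)%δ, and f̂(q) = (δ·q + α - β - 1)/α. Then for every integer r: f̂(f(r)) ≤ r < f̂(f(r)+1) and f̊(r)/α = r - f̂(f(r)). -/
theorem stmt_3 (α β δ : ℤ) (hα : 0 < α) (hδ : α ≤ δ)
    (f : ℤ → ℤ) (hf : ∀ r, f r = (α * r + β) / δ)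
    (fring : ℤ → ℤ) (hfring : ∀ r, fring r = (α * r + β) % δ)
    (fhat : ℤ → ℤ) (hfhat : ∀ q, fhat q = (δ * q + α - β - 1) / α) :
    ∀ r : ℤ, (fhat (f r) ≤ r ∧ r < fhat (f r + 1)) ∧ fring r / α = r - fhat (f r) := by
  intro r
  have hα' : α ≠ 0 := by omega
  have h1 := Int.mul_ediv_add_emod (α * r + β) δ
  have h2 := Int.emod_nonneg (α * r + β) (show δ ≠ 0 by omega)
  have h3 := Int.emod_lt_of_pos (α * r + β) (show (0:ℤ) < δ by omega)
  set m := (α * r + β) % δ with hm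
  set q := (α * r + β) / δ with hq
  have hms := Int.mul_ediv_add_emod m α
  have hs0 := Int.emod_nonneg m hα'
  have hs1 := Int.emod_lt_of_pos m hα
  set s := m % α with hs
  set qm := m / α with hqm
  -- (α - 1 - m) / α = -qm
  have key : α - 1 - m = (α - 1 - s) + (-qm) * α := by linarith
  have e0 : (α - 1 - s) / α = 0 := Int.ediv_eq_zero_of_lt (by omega) (by omega)
  have e1 : (α - 1 - m) / α = -qm := by
    rw [key, Int.add_mul_ediv_right _ _ hα', e0, zero_add]
  have hf1 : fhat (f r) = r - qm := by
    rw [hfhat, hf, ← hq]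
    have : δ * q + α - β - 1 = (α - 1 - m) + r * α := by linarith
    rw [this, Int.add_mul_ediv_right _ _ hα', e1]; ring
  have hf2 : r < fhat (f r + 1) := by
    rw [hfhat, hf, ← hq]
    have h4 : δ * (q + 1) + α - β - 1 = (δ + α - 1 - m) + r * α := by linarith
    rw [h4, Int.add_mul_ediv_right _ _ hα']
    have : 1 ≤ (δ + α - 1 - m) / α := by
      rw [Int.le_ediv_iff_mul_le hα]; omega
    omega
  refine ⟨⟨?_, hf2⟩, ?_⟩
  · have : 0 ≤ qm := Int.ediv_nonneg h2 (le_of_lt hα)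
    omega
  · rw [hfring, ← hm, ← hqm, hf1]; ring
end

section
/- Let δ, k be nonnegative integers with δ > 0. Set α' = 2^k/δ + 1 and ε = δ - 2^k%δ. Then α'·δ = 2^k + ε, and for every integer n: α'·n/2^k = n/δ if and only if 0 ≤ ε·(n/δ) + α'·(n%δ) < 2^k. -/
theorem stmt_5 (δ : ℤ) (k : ℕ) (hδ : 0 < δ)
    (α' ε : ℤ) (hα' : α' = 2 ^ k / δ + 1) (hε : ε = δ - 2 ^ k % δ) :
    α' * δ = 2 ^ k + ε ∧
      ∀ n : ℤ, α' * n / 2 ^ k = n / δ ↔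
        0 ≤ ε * (n / δ) + α' * (n % δ) ∧ ε * (n / δ) + α' * (n % δ) < 2 ^ k := by
  have hpow : (0:ℤ) < 2 ^ k := by positivity
  have hdm := Int.mul_ediv_add_emod (2^k : ℤ) δ
  have h1 : α' * δ = 2 ^ k + ε := by
    subst hα' hε; ring_nf; ring_nf at hdm; linarith
  refine ⟨h1, fun n => ?_⟩
  set r := ε * (n / δ) + α' * (n % δ) with hr
  have hn := Int.mul_ediv_add_emod n δ
  have key : α' * n = 2 ^ k * (n / δ) + r := by
    calc α' * n = α' * (δ * (n / δ) + n % δ) := by rw [hn]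
    _ = (α' * δ) * (n / δ) + α' * (n % δ) := by ring
    _ = 2 ^ k * (n / δ) + r := by rw [h1, hr]; ring
  have hdiv : α' * n / 2 ^ k = n / δ + r / 2 ^ k := by
    rw [key, add_comm (2 ^ k * (n / δ)) r, Int.add_mul_ediv_left _ _ (ne_of_gt hpow), add_comm]
  constructor
  · intro h
    have h0 : r / 2 ^ k = 0 := by omega
    have := Int.mul_ediv_add_emod r (2^k)
    rw [h0, mul_zero, zero_add] at this
    have h2 := Int.emod_nonneg r (ne_of_gt hpow)
    have h3 := Int.emod_lt_of_pos r hpow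
    omega
  · rintro ⟨h0, h1'⟩
    have : r / 2 ^ k = 0 := Int.ediv_eq_zero_of_lt h0 h1'
    omega
end

section
/- Let δ, k be nonnegative integers with δ > 0. Set α' = 2^k/δ + 1, ε = δ - 2^k%δ, and N = ⌈α'/ε⌉·δ - 1 (where ⌈α'/ε⌉ denotes the ceiling of the rational number α'·ε⁻¹). If ε ≤ α', then n/δ = α'·n/2^k for all integers n with 0 ≤ n < N. -/
theorem stmt_6 (δ : ℤ) (k : ℕ) (hδ : 0 < δ)
    (α' ε N : ℤ) (hα' : α' = 2 ^ k / δ + 1) (hε : ε = δ - 2 ^ k % δ)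
    (hN : N = ⌈(α' : ℚ) / (ε : ℚ)⌉ * δ - 1)
    (h : ε ≤ α') :
    ∀ n : ℤ, 0 ≤ n → n < N → n / δ = α' * n / 2 ^ k := by
  intro n hn hnN
  have hmod0 : 0 ≤ 2 ^ k % δ := Int.emod_nonneg _ hδ.ne'
  have hmodδ : 2 ^ k % δ < δ := Int.emod_lt_of_pos _ hδ
  have hε0 : 0 < ε := by omega
  have hα1 : 1 ≤ α' := by
    have : 0 ≤ (2:ℤ) ^ k / δ := Int.ediv_nonneg (by positivity) hδ.le
    omega
  have key : α' * δ = 2 ^ k + ε := by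
    have hde := Int.mul_ediv_add_emod (2 ^ k) δ
    subst hα' hε
    ring_nf
    ring_nf at hde
    linarith
  set C := ⌈(α' : ℚ) / (ε : ℚ)⌉ with hC
  have hεq : (0:ℚ) < (ε:ℚ) := by exact_mod_cast hε0
  have hCε : C * ε < α' + ε := by
    have h1 : (C:ℚ) < (α':ℚ) / (ε:ℚ) + 1 := Int.ceil_lt_add_one _
    have h2 : (C:ℚ) * ε < α' + ε := by
      have h3 := mul_lt_mul_of_pos_right h1 hεq
      rw [add_mul, div_mul_cancel₀ _ hεq.ne', one_mul] at h3
      exact h3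
    exact_mod_cast h2
  set q := n / δ with hq
  set r := n % δ with hr
  have hr0 : 0 ≤ r := Int.emod_nonneg n hδ.ne'
  have hrδ : r < δ := Int.emod_lt_of_pos n hδ
  have hn' : n = δ * q + r := (Int.mul_ediv_add_emod n δ).symm
  have hq0 : 0 ≤ q := Int.ediv_nonneg hn hδ.le
  have hqC : q ≤ C - 1 := by
    have hnC : n < C * δ := by omega
    have := (Int.ediv_lt_iff_lt_mul hδ).mpr hnC
    omega
  have hs0 : 0 ≤ q * ε + α' * r := by positivity
  have hs1 : q * ε + α' * r < 2 ^ k := by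
    rcases eq_or_lt_of_le hqC with hq1 | hq1
    · -- q = C - 1, so r ≤ δ - 2
      have hr2 : r ≤ δ - 2 := by nlinarith
      nlinarith
    · -- q ≤ C - 2, so (q+1)ε ≤ (C-1)ε < α'
      have : (q + 1) * ε < α' := by nlinarith
      nlinarith
  have hdecomp : α' * n = (q * ε + α' * r) + q * 2 ^ k := by
    linear_combination α' * hn' + q * key
  rw [hdecomp, Int.add_mul_ediv_right _ _ (by positivity : (2:ℤ)^k ≠ 0),
    Int.ediv_eq_zero_of_lt hs0 hs1, zero_add]
end

section
/- Let δ, k, w, l be nonnegative integers with 0 < δ < 2^w, 2^{w+l}%δ > 0, and δ - 2^{w+l}%δ ≤ 2^l. Set α' = 2^{w+l}/δ + 1. Then for every integer n with 0 ≤ n < 2^w: n%δ = δ·(α'·n % 2^{w+l})/2^{w+l}. -/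
theorem stmt_7 (δ : ℤ) (w l : ℕ) (hδ : 0 < δ) (hδw : δ < 2 ^ w)
    (hpos : 0 < 2 ^ (w + l) % δ) (hle : δ - 2 ^ (w + l) % δ ≤ 2 ^ l)
    (α' : ℤ) (hα' : α' = 2 ^ (w + l) / δ + 1) :
    ∀ n : ℤ, 0 ≤ n → n < 2 ^ w →
      n % δ = δ * (α' * n % 2 ^ (w + l)) / 2 ^ (w + l) := by
  intro n hn0 hnw
  set N : ℤ := 2 ^ (w + l) with hN
  have hNpos : (0:ℤ) < N := by positivity
  set r : ℤ := N % δ with hr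
  set s : ℤ := n % δ with hs
  set m : ℤ := n / δ with hm
  have hq' : δ * (N / δ) = N - r := by
    have := Int.mul_ediv_add_emod N δ
    linarith
  have hn : n = δ * m + s := by
    have := Int.mul_ediv_add_emod n δ
    linarith
  have hs0 : 0 ≤ s := Int.emod_nonneg n (ne_of_gt hδ)
  have hsδ : s < δ := Int.emod_lt_of_pos n hδ
  have hrδ : r < δ := Int.emod_lt_of_pos N hδ
  have hm0 : 0 ≤ m := Int.ediv_nonneg hn0 hδ.le
  set t : ℤ := (δ - r) * m + (N / δ + 1) * s with ht
  have ht0 : 0 ≤ t := by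
    have h1 : 0 ≤ N / δ := Int.ediv_nonneg hNpos.le hδ.le
    have h2 : 0 ≤ δ - r := by linarith
    positivity
  have hδt : δ * t = (δ - r) * n + N * s := by
    rw [ht, hn]
    linear_combination s * hq'
  have hrem : 0 ≤ (δ - r) * n ∧ (δ - r) * n < N := by
    constructor
    · exact mul_nonneg (by linarith) hn0
    · calc (δ - r) * n ≤ 2 ^ l * n := by
            exact mul_le_mul_of_nonneg_right hle hn0
        _ < 2 ^ l * 2 ^ w := by
            exact mul_lt_mul_of_pos_left hnw (by positivity)
        _ = N := by rw [hN, pow_add]; ring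
  have htN : t < N := by
    have h1 : δ * t < N * (s + 1) := by
      have := hrem.2
      nlinarith
    have h2 : N * (s + 1) ≤ N * δ := by
      apply mul_le_mul_of_nonneg_left (by linarith) hNpos.le
    nlinarith
  have hmod : α' * n % N = t := by
    have heq : α' * n = t + N * m := by
      rw [hα', hn, ht]
      linear_combination m * hq'
    rw [heq, Int.add_mul_emod_self_left, Int.emod_eq_of_lt ht0 htN]
  rw [hmod, hδt]
  have : (δ - r) * n + N * s = (δ - r) * n + s * N := by ring
  rw [this, Int.add_mul_ediv_right _ _ (ne_of_gt hNpos),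
    Int.ediv_eq_zero_of_lt hrem.1 hrem.2, zero_add]
end

section
/- Let δ, k be nonnegative integers with δ > 0. Set α' = 2^k/δ + 1, ε = δ - 2^k%δ, and M = ⌈2^k/ε⌉ (ceiling of the rational 2^k·ε⁻¹). If ε ≤ α', then n%δ = δ·(α'·n % 2^k)/2^k for all integers n with 0 ≤ n < M. -/
theorem stmt_8 (δ : ℤ) (k : ℕ) (hδ : 0 < δ)
    (α' ε M : ℤ) (hα' : α' = 2 ^ k / δ + 1) (hε : ε = δ - 2 ^ k % δ)
    (hM : M = ⌈((2 : ℚ) ^ k) / (ε : ℚ)⌉)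
    (h : ε ≤ α') :
    ∀ n : ℤ, 0 ≤ n → n < M → n % δ = δ * (α' * n % 2 ^ k) / 2 ^ k := by
  intro n hn hnM
  set N : ℤ := 2 ^ k with hNdef
  have hN : (0:ℤ) < N := by positivity
  have hεpos : 0 < ε := by
    have := Int.emod_lt_of_pos N hδ
    omega
  have hδα : δ * α' = N + ε := by
    have h1 := Int.mul_ediv_add_emod N δ
    rw [hα', hε, mul_add, mul_one]
    linarith
  -- ε * n < N
  have hεn : ε * n < N := by
    have h2 : (n : ℚ) < (2:ℚ) ^ k / (ε : ℚ) := by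
      rw [← Int.lt_ceil, ← hM]; exact hnM
    have hεq : (0:ℚ) < (ε:ℚ) := by exact_mod_cast hεpos
    have h3 : (ε:ℚ) * (n:ℚ) < (2:ℚ)^k := by
      rw [div_eq_mul_inv] at h2
      calc (ε:ℚ) * n < (ε:ℚ) * ((2:ℚ)^k * (ε:ℚ)⁻¹) := by
            exact mul_lt_mul_of_pos_left h2 hεq
        _ = (2:ℚ)^k := by field_simp
    rw [hNdef]
    exact_mod_cast h3
  set q : ℤ := n / δ with hqdef
  set r : ℤ := n % δ with hrdef
  have hr0 : 0 ≤ r := Int.emod_nonneg n (ne_of_gt hδ)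
  have hrδ : r < δ := Int.emod_lt_of_pos n hδ
  have hqr : δ * q + r = n := Int.mul_ediv_add_emod n δ
  have hq0 : 0 ≤ q := Int.ediv_nonneg hn (le_of_lt hδ)
  have hα'0 : 0 ≤ α' := by
    have : 0 ≤ N / δ := Int.ediv_nonneg (le_of_lt hN) (le_of_lt hδ)
    omega
  set c : ℤ := q * ε + α' * r with hcdef
  have hδc : δ * c = ε * n + N * r := by
    have : δ * c = ε * (δ * q) + (δ * α') * r := by ring
    rw [this, hδα]; nlinarith [hqr]
  have hc0 : 0 ≤ c := by positivity
  have hcN : c < N := by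
    have h4 : δ * c < δ * N := by nlinarith
    exact lt_of_mul_lt_mul_left h4 (le_of_lt hδ)
  have hmod : α' * n % N = c := by
    have h5 : α' * n = q * N + c := by
      have : α' * n = α' * (δ * q + r) := by rw [hqr]
      nlinarith [hδα]
    rw [h5, add_comm, Int.add_mul_emod_self_right, Int.emod_eq_of_lt hc0 hcN]
  rw [hmod, hδc]
  have h6 : (ε * n + N * r) / N = ε * n / N + r := by
    rw [mul_comm N r, Int.add_mul_ediv_right _ _ (ne_of_gt hN)]
  rw [h6, Int.ediv_eq_zero_of_lt (by positivity : (0:ℤ) ≤ ε * n) hεn, zero_add]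
end

section
/- Let f(r) = (α·r + β)/δ and f'(r) = (α'·r + β')/δ' be Euclidean affine functions with δ ≥ α > 0 and δ' > 0, and suppose f(r) = f'(r) for all r in the interval [a, b). If a = f̂(f(a)) (where f̂(q) = (δ·q + α - β - 1)/α) and f'(a - 1) < f'(a), then for all r with a ≤ r < b: ((α·r + β)%δ)/α = ((α'·r + β')%δ')/α'. -/
private lemma ediv_bounds (x : ℤ) {d : ℤ} (hd : 0 < d) :
    d * (x / d) ≤ x ∧ x < d * (x / d) + d := by
  have h1 := Int.emod_nonneg x (by omega : d ≠ 0)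
  have h2 := Int.emod_lt_of_pos x hd
  rw [Int.emod_def] at h1 h2
  constructor <;> linarith

private lemma ediv_eq_of {d q x : ℤ} (hd : 0 < d) (h1 : d * q ≤ x) (h2 : x < d * q + d) :
    x / d = q := by
  have hx : x = (x - d * q) + q * d := by ring
  rw [hx, Int.add_mul_ediv_right _ _ (by omega : d ≠ 0),
    Int.ediv_eq_zero_of_lt (by linarith) (by linarith), zero_add]

private lemma le_ediv_of {d q x : ℤ} (hd : 0 < d) (h : d * q ≤ x) : q ≤ x / d := by
  have h2 := Int.ediv_le_ediv hd h
  rwa [Int.mul_ediv_cancel_left _ (by omega : d ≠ 0)] at h2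

private lemma ediv_lt_of {d q x : ℤ} (hd : 0 < d) (h : x < d * q) : x / d < q := by
  have h1 : x / d ≤ (d * q - 1) / d := Int.ediv_le_ediv hd (by omega)
  have hr : d * (q - 1) = d * q - d := by ring
  have h2 : (d * q - 1) / d = q - 1 := ediv_eq_of hd (by linarith) (by linarith)
  omega

theorem stmt_9 (α β δ α' β' δ' a b : ℤ) (hα : 0 < α) (hδ : α ≤ δ) (hδ' : 0 < δ')
    (f f' : ℤ → ℤ)
    (hf : ∀ r, f r = (α * r + β) / δ)
    (hf' : ∀ r, f' r = (α' * r + β') / δ')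
    (heq : ∀ r, a ≤ r → r < b → f r = f' r)
    (ha : a = (δ * f a + α - β - 1) / α)
    (ha' : f' (a - 1) < f' a) :
    ∀ r : ℤ, a ≤ r → r < b →
      ((α * r + β) % δ) / α = ((α' * r + β') % δ') / α' := by
  intro r har hrb
  have hδ0 : 0 < δ := lt_of_lt_of_le hα hδ
  -- α' is positive
  have hα' : 0 < α' := by
    by_contra h
    push_neg at h
    have h1 : α' * a + β' ≤ α' * (a - 1) + β' := by nlinarith
    have h2 := Int.ediv_le_ediv hδ' h1
    rw [hf', hf'] at ha'
    omega
  set q := f r with hq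
  set s := (δ * q + α - β - 1) / α with hs
  obtain ⟨hsb1, hsb2⟩ := ediv_bounds (δ * q + α - β - 1) hα
  rw [← hs] at hsb1 hsb2
  -- bounds: δ*q - β ≤ α*s and α*s + β ≤ δ*q + α - 1
  have hs_lb : δ * q - β ≤ α * s := by linarith
  have hs_ub : α * s + β ≤ δ * q + α - 1 := by linarith
  -- f s = q
  have hfs : f s = q := by
    rw [hf]
    exact ediv_eq_of hδ0 (by linarith) (by linarith)
  -- δ*q ≤ α*r + β  (since f r = q)
  have hrq : δ * q ≤ α * r + β := by
    have := (ediv_bounds (α * r + β) hδ0).1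
    rw [← hf r, ← hq] at this
    exact this
  -- f a ≤ q
  have hfaq : f a ≤ q := by
    rw [hq, hf, hf]
    exact Int.ediv_le_ediv hδ0 (by nlinarith)
  -- a ≤ s
  have has : a ≤ s := by
    rw [ha, hs]
    exact Int.ediv_le_ediv hα (by nlinarith)
  -- s ≤ r
  have hsr : s ≤ r := by
    have h1 : α * s < α * (r + 1) := by nlinarith
    have := lt_of_mul_lt_mul_left h1 (le_of_lt hα)
    omega
  -- f' s = q
  have hfs' : f' s = q := by rw [← heq s has (by omega), hfs]
  -- δ'*q ≤ α'*s + β'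
  have h8 : δ' * q ≤ α' * s + β' := by
    have := (ediv_bounds (α' * s + β') hδ').1
    rw [← hf' s, hfs'] at this
    exact this
  -- α'*(s-1) + β' < δ'*q
  have h9 : α' * (s - 1) + β' < δ' * q := by
    by_contra h
    push_neg at h
    have hle : q ≤ f' (s - 1) := by
      rw [hf']
      exact le_ediv_of hδ' h
    rcases eq_or_lt_of_le has with hsa | hsa
    · -- s = a : use ha'
      have hfa : f' a = q := by rw [← hsa] at hfs'; exact hfs'
      rw [← hsa] at hle
      omega
    · -- a < s : f'(s-1) = f(s-1) < q
      have heq1 : f (s - 1) = f' (s - 1) := heq (s - 1) (by omega) (by omega)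
      have hlt : f (s - 1) < q := by
        rw [hf]
        exact ediv_lt_of hδ0 (by nlinarith)
      omega
  -- f' r = q
  have hfr' : f' r = q := by rw [← heq r har hrb, hq]
  -- compute LHS
  have hL : (α * r + β) % δ / α = r - s := by
    have hm : (α * r + β) % δ = α * r + β - δ * q := by
      rw [Int.emod_def, ← hf r, ← hq]
    rw [hm]
    have hr1 : α * (r - s) = α * r - α * s := by ring
    exact ediv_eq_of hα (by linarith) (by linarith)
  -- compute RHS
  have hR : (α' * r + β') % δ' / α' = r - s := by
    have hm : (α' * r + β') % δ' = α' * r + β' - δ' * q := by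
      rw [Int.emod_def, ← hf' r, hfr']
    rw [hm]
    have hr1 : α' * (r - s) = α' * r - α' * s := by ring
    have hr2 : α' * (s - 1) = α' * s - α' := by ring
    exact ediv_eq_of hα' (by linarith) (by linarith)
  rw [hL, hR]
end
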